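/- If E is a regular-oriented word equation and E ⇒ E' is a step of the Nielsen transformation, then E' is also regular-oriented. -/

import Mathlib

/-!
Only orientedness has to be tracked: a side whose variables increase strictly along a strict
total order contains every variable at most once. Reading off the sequence of variables of each
side, orientedness says that both sequences are chains of one strict total order. Erasing a
variable and the rules P1–P3 only delete entries of these sequences (P2 and P3 replace `y` by
`a y`, which keeps the sequence). The real case is P4, say
`x w₁ = y w₂ ⇒ w₁[xy/y] = y w₂[xy/y]`: if `y` occurs in `w₁`, then `x < y` forbids `x` in `w₂`,
so moving `x` in the order to sit immediately below `y` orders both new sides. The other P4 rule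
is the mirror image.
-/

namespace WordEq

variable {A V : Type*}

/-- A word over the alphabet of constants `A` and variables `V`. -/
abbrev Word (A V : Type*) := List (A ⊕ V)

/-- A word equation `L = R`, given as the pair `(L, R)`. -/
abbrev Equation (A V : Type*) := Word A V × Word A V

/-- Substitute the word `r` for every occurrence of the variable `x` in `w`. -/
def substVar [DecidableEq V] (x : V) (r : Word A V) (w : Word A V) : Word A V :=
  w.flatMap fun s =>
    match s with
    | Sum.inl a => [Sum.inl a]
    | Sum.inr y => if y = x then r else [Sum.inr y]

/-- The number of occurrences of the variable `x` in the equation `E`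
(counting both sides). -/
def varCount [DecidableEq A] [DecidableEq V] (E : Equation A V) (x : V) : ℕ :=
  (E.1 ++ E.2).count (Sum.inr x)

/-- An equation is quadratic if every variable occurs at most twice. -/
def Quadratic [DecidableEq A] [DecidableEq V] (E : Equation A V) : Prop :=
  ∀ x : V, varCount E x ≤ 2

/-- Apply a substitution (a map from variables to constant words) to a word,
i.e. the unique monoid homomorphism `(A ∪ V)* → A*` extending `σ` and fixing
every constant. -/
def applySub (σ : V → List A) (w : Word A V) : List A :=
  w.flatMap fun s =>
    match s with
    | Sum.inl a => [a]
    | Sum.inr x => σ x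

/-- `σ` is a solution of the word equation `E`. -/
def IsSolution (σ : V → List A) (E : Equation A V) : Prop :=
  applySub σ E.1 = applySub σ E.2

/-- The length `|E| = |L| + |R|` of a word equation. -/
def eqLen (E : Equation A V) : ℕ := E.1.length + E.2.length

/-- The Nielsen transformation (Levi's method) rewriting relation on word
equations.  The rules `p1`–`p4` remove a nonempty prefix from an equation
`α·w₁ = β·w₂`; the rules `eraseL`/`eraseR` erase a variable that is guessed to
denote the empty word (substituting `ε` for it everywhere). -/
inductive Nielsen [DecidableEq V] : Equation A V → Equation A V → Prop
  | eraseL (x : V) (w₁ w₂ : Word A V) :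
      Nielsen (Sum.inr x :: w₁, w₂) (substVar x [] w₁, substVar x [] w₂)
  | eraseR (w₁ : Word A V) (x : V) (w₂ : Word A V) :
      Nielsen (w₁, Sum.inr x :: w₂) (substVar x [] w₁, substVar x [] w₂)
  | p1 (α : A ⊕ V) (w₁ w₂ : Word A V) :
      Nielsen (α :: w₁, α :: w₂) (w₁, w₂)
  | p2 (a : A) (y : V) (w₁ w₂ : Word A V) :
      Nielsen (Sum.inl a :: w₁, Sum.inr y :: w₂)
        (substVar y [Sum.inl a, Sum.inr y] w₁,
          Sum.inr y :: substVar y [Sum.inl a, Sum.inr y] w₂)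
  | p3 (x : V) (a : A) (w₁ w₂ : Word A V) :
      Nielsen (Sum.inr x :: w₁, Sum.inl a :: w₂)
        (Sum.inr x :: substVar x [Sum.inl a, Sum.inr x] w₁,
          substVar x [Sum.inl a, Sum.inr x] w₂)
  | p4L (x y : V) (hxy : x ≠ y) (w₁ w₂ : Word A V) :
      Nielsen (Sum.inr x :: w₁, Sum.inr y :: w₂)
        (substVar y [Sum.inr x, Sum.inr y] w₁,
          Sum.inr y :: substVar y [Sum.inr x, Sum.inr y] w₂)
  | p4R (x y : V) (hxy : x ≠ y) (w₁ w₂ : Word A V) :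
      Nielsen (Sum.inr x :: w₁, Sum.inr y :: w₂)
        (Sum.inr x :: substVar x [Sum.inr y, Sum.inr x] w₁,
          substVar x [Sum.inr y, Sum.inr x] w₂)

/-- A word equation is regular if each variable occurs at most once on each
side. -/
def Regular [DecidableEq A] [DecidableEq V] (E : Equation A V) : Prop :=
  ∀ x : V, E.1.count (Sum.inr x) ≤ 1 ∧ E.2.count (Sum.inr x) ≤ 1

/-- On the word `w`, the variables occur in `lt`-increasing order. -/
def SideOrdered (lt : V → V → Prop) (w : Word A V) : Prop :=
  ∀ (w₁ w₂ w₃ : Word A V) (α β : V),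
    w = w₁ ++ Sum.inr α :: w₂ ++ Sum.inr β :: w₃ → lt α β

/-- A word equation is oriented if there is a strict total order on the
variables such that on each side the variables occur in increasing order. -/
def Oriented (E : Equation A V) : Prop :=
  ∃ lt : V → V → Prop,
    IsStrictTotalOrder V lt ∧ SideOrdered lt E.1 ∧ SideOrdered lt E.2

/-- A regular-oriented word equation. -/
def RegularOriented [DecidableEq A] [DecidableEq V] (E : Equation A V) : Prop :=
  Regular E ∧ Oriented E

open scoped List

def vars (w : Word A V) : List V := w.filterMap Sum.getRight?

@[simp] lemma vars_nil : vars ([] : Word A V) = [] := rfl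

@[simp] lemma vars_cons_inl (a : A) (w : Word A V) : vars (Sum.inl a :: w) = vars w := rfl

@[simp] lemma vars_cons_inr (x : V) (w : Word A V) : vars (Sum.inr x :: w) = x :: vars w := rfl

@[simp] lemma vars_append (u w : Word A V) : vars (u ++ w) = vars u ++ vars w :=
  List.filterMap_append

@[simp] lemma mem_vars {x : V} {w : Word A V} : x ∈ vars w ↔ Sum.inr x ∈ w := by
  simp [vars]

lemma count_vars [DecidableEq A] [DecidableEq V] (w : Word A V) (x : V) :
    (vars w).count x = w.count (Sum.inr x) := by
  rw [vars, List.count_filterMap, List.count_eq_countP]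
  congr 1
  funext s
  cases s <;> rfl

lemma vars_sublist_vars {u w : Word A V} (h : u <+ w) : vars u <+ vars w :=
  h.filterMap _

section Substitution

variable [DecidableEq V] {x : V} {r : Word A V}

@[simp] lemma substVar_nil : substVar x r [] = [] := rfl

@[simp] lemma substVar_append (u w : Word A V) :
    substVar x r (u ++ w) = substVar x r u ++ substVar x r w :=
  List.flatMap_append

@[simp] lemma substVar_cons_inl (a : A) (w : Word A V) :
    substVar x r (Sum.inl a :: w) = Sum.inl a :: substVar x r w := rfl

lemma substVar_cons_inr (y : V) (w : Word A V) :
    substVar x r (Sum.inr y :: w) = (if y = x then r else [Sum.inr y]) ++ substVar x r w := rfl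

@[simp] lemma substVar_cons_inr_self (w : Word A V) :
    substVar x r (Sum.inr x :: w) = r ++ substVar x r w := by
  simp [substVar_cons_inr]

lemma substVar_of_not_mem {w : Word A V} (h : Sum.inr x ∉ w) : substVar x r w = w := by
  induction w with
  | nil => rfl
  | cons s w ih =>
    simp only [List.mem_cons, not_or] at h
    rcases s with a | y
    · simp [ih h.2]
    · have hyx : y ≠ x := fun hyx => h.1 (by rw [hyx])
      simp [substVar_cons_inr, hyx, ih h.2]

lemma substVar_nil_sublist (x : V) (w : Word A V) : substVar x [] w <+ w := by
  induction w with
  | nil => simp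
  | cons s w ih =>
    rcases s with a | y
    · exact ih.cons_cons _
    · by_cases hyx : y = x
      · simpa [substVar_cons_inr, hyx] using ih.cons _
      · simpa [substVar_cons_inr, hyx] using ih.cons_cons (Sum.inr y)

lemma vars_substVar_of_vars_eq (hr : vars r = [x]) (w : Word A V) :
    vars (substVar x r w) = vars w := by
  induction w with
  | nil => rfl
  | cons s w ih =>
    rcases s with a | y
    · simpa using ih
    · by_cases hyx : y = x <;> simp [substVar_cons_inr, hyx, hr, ih]

end Substitution

lemma sideOrdered_iff_pairwise {lt : V → V → Prop} {w : Word A V} :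
    SideOrdered lt w ↔ (vars w).Pairwise lt := by
  constructor
  · intro h
    induction w with
    | nil => simp
    | cons s w ih =>
      have htail : SideOrdered lt w := fun w₁ w₂ w₃ α β hw =>
        h (s :: w₁) w₂ w₃ α β (by simp [hw])
      rcases s with a | α
      · simpa using ih htail
      · refine List.pairwise_cons.2 ⟨fun β hβ => ?_, ih htail⟩
        obtain ⟨w₂, w₃, rfl⟩ := List.append_of_mem (mem_vars.1 hβ)
        exact h [] w₂ w₃ α β rfl
  · rintro h w₁ w₂ w₃ α β rfl
    simp only [vars_append, vars_cons_inr] at h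
    exact (List.pairwise_append.1 h).2.2 α (by simp) β (by simp)

lemma oriented_iff {E : Equation A V} :
    Oriented E ↔ ∃ lt : V → V → Prop,
      IsStrictTotalOrder V lt ∧ (vars E.1).Pairwise lt ∧ (vars E.2).Pairwise lt := by
  simp only [Oriented, sideOrdered_iff_pairwise]

lemma Oriented.swap {E : Equation A V} (h : Oriented E) : Oriented E.swap :=
  let ⟨lt, hlt, h₁, h₂⟩ := h
  ⟨lt, hlt, h₂, h₁⟩

lemma Oriented.of_vars_sublist {E E' : Equation A V} (h : Oriented E)
    (h₁ : vars E'.1 <+ vars E.1) (h₂ : vars E'.2 <+ vars E.2) : Oriented E' := by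
  obtain ⟨lt, hlt, hE₁, hE₂⟩ := oriented_iff.1 h
  exact oriented_iff.2 ⟨lt, hlt, hE₁.sublist h₁, hE₂.sublist h₂⟩

lemma Oriented.regular [DecidableEq A] [DecidableEq V] {E : Equation A V} (h : Oriented E) :
    Regular E := by
  obtain ⟨lt, hlt, h₁, h₂⟩ := oriented_iff.1 h
  have count_le_one {w : Word A V} (hw : (vars w).Pairwise lt) (x : V) :
      w.count (Sum.inr x) ≤ 1 := by
    rw [← count_vars]
    exact List.nodup_iff_count_le_one.1 hw.nodup x
  exact fun x => ⟨count_le_one h₁ x, count_le_one h₂ x⟩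

section MoveBelow

variable [DecidableEq V] {lt : V → V → Prop} {x y : V}

def moveBelow (lt : V → V → Prop) (x y : V) : V → V → Prop :=
  Function.onFun (Prod.Lex lt (· < ·)) fun a => if a = x then (y, false) else (a, true)

lemma isStrictTotalOrder_moveBelow [IsStrictTotalOrder V lt] :
    IsStrictTotalOrder V (moveBelow lt x y) := by
  have : IsStrictTotalOrder (V × Bool) (Prod.Lex lt (· < ·)) := {}
  unfold moveBelow
  refine Function.Injective.isStrictTotalOrder_onFun _ fun a b hab => ?_
  by_cases ha : a = x <;> by_cases hb : b = x <;> simp_all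

lemma moveBelow_iff_of_ne {a b : V} (ha : a ≠ x) (hb : b ≠ x) :
    moveBelow lt x y a b ↔ lt a b := by
  simp [moveBelow, Function.onFun, ha, hb, Prod.lex_def]

lemma moveBelow_self_left_iff {b : V} (hb : b ≠ x) :
    moveBelow lt x y x b ↔ lt y b ∨ y = b := by
  simp [moveBelow, Function.onFun, hb, Prod.lex_def]

lemma moveBelow_self_right_iff {a : V} (ha : a ≠ x) :
    moveBelow lt x y a x ↔ lt a y := by
  simp [moveBelow, Function.onFun, ha, Prod.lex_def]

lemma pairwise_moveBelow_iff_of_not_mem {l : List V} (hx : x ∉ l) :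
    l.Pairwise (moveBelow lt x y) ↔ l.Pairwise lt :=
  List.Pairwise.iff_of_mem fun ha hb =>
    moveBelow_iff_of_ne (ne_of_mem_of_not_mem ha hx) (ne_of_mem_of_not_mem hb hx)

lemma pairwise_moveBelow_insert {l₁ l₂ : List V} (h : (l₁ ++ y :: l₂).Pairwise lt)
    (hx : x ∉ l₁ ++ y :: l₂) : (l₁ ++ x :: y :: l₂).Pairwise (moveBelow lt x y) := by
  have hx₁ : x ∉ l₁ := fun h => hx (List.mem_append_left _ h)
  have hx₂ : x ∉ y :: l₂ := fun h => hx (List.mem_append_right _ h)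
  rw [List.pairwise_append] at h ⊢
  obtain ⟨h₁, h₂, h₁₂⟩ := h
  refine ⟨(pairwise_moveBelow_iff_of_not_mem hx₁).2 h₁,
    List.pairwise_cons.2 ⟨fun b hb => ?_, (pairwise_moveBelow_iff_of_not_mem hx₂).2 h₂⟩,
    fun a ha b hb => ?_⟩
  · rw [moveBelow_self_left_iff (ne_of_mem_of_not_mem hb hx₂)]
    rcases List.mem_cons.1 hb with rfl | hb
    · exact Or.inr rfl
    · exact Or.inl ((List.pairwise_cons.1 h₂).1 b hb)
  · have hax : a ≠ x := ne_of_mem_of_not_mem ha hx₁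
    rcases List.mem_cons.1 hb with rfl | hb
    · exact (moveBelow_self_right_iff hax).2 (h₁₂ a ha y List.mem_cons_self)
    · exact (moveBelow_iff_of_ne hax (ne_of_mem_of_not_mem hb hx₂)).2 (h₁₂ a ha b hb)

end MoveBelow

lemma Oriented.p4L [DecidableEq V] {x y : V} {w₁ w₂ : Word A V}
    (h : Oriented (Sum.inr x :: w₁, Sum.inr y :: w₂)) :
    Oriented (substVar y [Sum.inr x, Sum.inr y] w₁,
      Sum.inr y :: substVar y [Sum.inr x, Sum.inr y] w₂) := by
  obtain ⟨lt, hlt, h₁, h₂⟩ := oriented_iff.1 h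
  rw [vars_cons_inr, List.pairwise_cons] at h₁ h₂
  have hy₂ : Sum.inr y ∉ w₂ := fun hy => irrefl y (h₂.1 y (mem_vars.2 hy))
  rw [substVar_of_not_mem hy₂]
  by_cases hy₁ : Sum.inr y ∈ w₁
  · obtain ⟨u, v, rfl⟩ := List.append_of_mem hy₁
    simp only [vars_append, vars_cons_inr] at h₁
    obtain ⟨hyu, hyv⟩ : Sum.inr y ∉ u ∧ Sum.inr y ∉ v := by
      simpa using (List.nodup_cons.1 (List.nodup_middle.1 h₁.2.nodup)).1
    have hxy : lt x y := h₁.1 y (by simp)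
    have hx₁ : x ∉ vars u ++ y :: vars v := fun hx => irrefl x (h₁.1 x hx)
    have hx₂ : x ∉ y :: vars w₂ :=
      List.not_mem_cons_of_ne_of_not_mem (ne_of_irrefl hxy) fun hx => asymm hxy (h₂.1 x hx)
    refine oriented_iff.2 ⟨moveBelow lt x y, isStrictTotalOrder_moveBelow, ?_, ?_⟩
    · simpa [substVar_of_not_mem hyu, substVar_of_not_mem hyv] using
        pairwise_moveBelow_insert h₁.2 hx₁
    · exact (pairwise_moveBelow_iff_of_not_mem hx₂).2 (List.pairwise_cons.2 h₂)
  · rw [substVar_of_not_mem hy₁]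
    exact oriented_iff.2 ⟨lt, hlt, h₁.2, List.pairwise_cons.2 h₂⟩

lemma Nielsen.oriented [DecidableEq V] {E E' : Equation A V} (h : Nielsen E E')
    (hE : Oriented E) : Oriented E' := by
  cases h with
  | eraseL x w₁ w₂ =>
    exact hE.of_vars_sublist
      (vars_sublist_vars ((substVar_nil_sublist x w₁).trans (List.sublist_cons_self _ _)))
      (vars_sublist_vars (substVar_nil_sublist x w₂))
  | eraseR w₁ x w₂ =>
    exact hE.of_vars_sublist (vars_sublist_vars (substVar_nil_sublist x w₁))
      (vars_sublist_vars ((substVar_nil_sublist x w₂).trans (List.sublist_cons_self _ _)))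
  | p1 α w₁ w₂ =>
    exact hE.of_vars_sublist (vars_sublist_vars (List.sublist_cons_self α w₁))
      (vars_sublist_vars (List.sublist_cons_self α w₂))
  | p2 a y w₁ w₂ =>
    refine hE.of_vars_sublist ?_ ?_ <;>
      simp [vars_substVar_of_vars_eq (r := [Sum.inl a, Sum.inr y]) rfl]
  | p3 x a w₁ w₂ =>
    refine hE.of_vars_sublist ?_ ?_ <;>
      simp [vars_substVar_of_vars_eq (r := [Sum.inl a, Sum.inr x]) rfl]
  | p4L => exact hE.p4L
  | p4R => exact hE.swap.p4L.swap

theorem nielsen_preserves_regularOriented_general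
    [DecidableEq A] [DecidableEq V]
    {E E' : Equation A V} (hro : RegularOriented E) (h : Nielsen E E') :
    RegularOriented E' := by
  have hE' := h.oriented hro.2
  exact ⟨hE'.regular, hE'⟩

/-- A Nielsen transformation step preserves
regular-orientedness. -/
theorem nielsen_preserves_regularOriented
    [Finite A] [Finite V] [DecidableEq A] [DecidableEq V]
    {E E' : Equation A V} (hro : RegularOriented E) (h : Nielsen E E') :
    RegularOriented E' :=
  nielsen_preserves_regularOriented_general hro h

end WordEq
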